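/- Let F, G, F' be subspaces of a finite-dimensional real inner product space E such that F and G are perpendicular, meaning the orthogonal complements of F ∩ G within F and within G are orthogonal to each other. If dim(F' ∩ G) = dim(F ∩ G), then the Hausdorff angle distance between F ∩ G and F' ∩ G is at most the Hausdorff angle distance between F and F'. -/

import Mathlib

/-- The projective angle metric between (the lines spanned by) two vectors. -/
noncomputable def projAngle {E : Type*} [NormedAddCommGroup E] [InnerProductSpace ℝ E]
    (x y : E) : ℝ := Real.arccos (|(inner ℝ x y : ℝ)| / (‖x‖ * ‖y‖))

/-- The Hausdorff distance between `P(A)` and `P(B)` in the projective angle metric. -/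
noncomputable def hausAngle {E : Type*} [NormedAddCommGroup E] [InnerProductSpace ℝ E]
    (A B : Submodule ℝ E) : ℝ :=
  max (⨆ x : {x : E // x ∈ A ∧ x ≠ 0}, ⨅ y : {y : E // y ∈ B ∧ y ≠ 0},
        projAngle (x : E) (y : E))
      (⨆ y : {y : E // y ∈ B ∧ y ≠ 0}, ⨅ x : {x : E // x ∈ A ∧ x ≠ 0},
        projAngle (y : E) (x : E))

/-!
Let `P` be the orthogonal projection onto `K = F ∩ G`. The angle from `ȳ` to `P(K)` is
`arccos (‖P y‖ / ‖y‖)`, and perpendicularity of `F` and `G` gives `⟪x, y⟫ = ⟪P x, P y⟫` for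
`x ∈ F`, `y ∈ G`, so a vector of `G` is no closer to `P(F)` than to `P(K)`. Hence every line of
`F' ∩ G` lies within `δ = α^Haus(F, F')` of `P(K)`. When `δ < π / 2` (otherwise there is nothing
to prove, all angles being at most `π / 2`) this makes `P` injective on `F' ∩ G`, hence onto `K`
by the dimension hypothesis; a line `P y` of `K` is then at angle `arccos (‖P y‖ / ‖y‖) ≤ δ` from
`ȳ ∈ P(F' ∩ G)`.
-/

section

open Real

variable {E : Type*} [NormedAddCommGroup E] [InnerProductSpace ℝ E]

lemma projAngle_comm (x y : E) : projAngle x y = projAngle y x := by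
  rw [projAngle, projAngle, real_inner_comm, mul_comm]

lemma projAngle_nonneg (x y : E) : 0 ≤ projAngle x y := arccos_nonneg _

lemma projAngle_le_pi_div_two (x y : E) : projAngle x y ≤ π / 2 :=
  arccos_le_pi_div_two.2 (by positivity)

lemma arccos_div_norm_le_projAngle {x y : E} {a : ℝ} (hy : y ≠ 0)
    (h : |(inner ℝ x y : ℝ)| ≤ a * ‖y‖) : arccos (a / ‖x‖) ≤ projAngle x y := by
  refine antitone_arccos ?_
  rw [mul_comm, ← div_div]
  gcongr
  exact (div_le_iff₀ (norm_pos_iff.2 hy)).2 h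

lemma projAngle_self_starProjection (K : Submodule ℝ E) [K.HasOrthogonalProjection] (y : E) :
    projAngle y (K.starProjection y) = arccos (‖K.starProjection y‖ / ‖y‖) := by
  have hinner : (inner ℝ y (K.starProjection y) : ℝ) = ‖K.starProjection y‖ ^ 2 := by
    rw [← K.starProjection_eq_self_iff.2 (K.starProjection_apply_mem y),
      ← K.inner_starProjection_left_eq_right, K.starProjection_eq_self_iff.2
      (K.starProjection_apply_mem y), real_inner_self_eq_norm_sq]
  rw [projAngle, hinner, abs_of_nonneg (sq_nonneg _)]
  rcases eq_or_ne ‖K.starProjection y‖ 0 with h | h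
  · simp [h]
  · rw [sq, mul_comm ‖y‖, mul_div_mul_left _ _ h]

/-- The distance from `x̄` to `P(B)` in `P(E)`; the infimum is over an empty family, hence `0`,
when `B = ⊥`. -/
noncomputable def angleToSubspace (x : E) (B : Submodule ℝ E) : ℝ :=
  ⨅ y : {y : E // y ∈ B ∧ y ≠ 0}, projAngle x (y : E)

lemma angleToSubspace_nonneg (x : E) (B : Submodule ℝ E) : 0 ≤ angleToSubspace x B :=
  Real.iInf_nonneg fun _ => projAngle_nonneg _ _

lemma angleToSubspace_le_projAngle (x : E) {B : Submodule ℝ E} {y : E} (hy : y ∈ B)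
    (hy0 : y ≠ 0) : angleToSubspace x B ≤ projAngle x y :=
  ciInf_le ⟨0, by rintro _ ⟨_, rfl⟩; exact projAngle_nonneg _ _⟩ (⟨y, hy, hy0⟩ : {y // _})

lemma angleToSubspace_bot (x : E) : angleToSubspace x ⊥ = 0 := by
  have : IsEmpty {y : E // y ∈ (⊥ : Submodule ℝ E) ∧ y ≠ 0} :=
    ⟨fun y => y.2.2 ((Submodule.mem_bot ℝ).1 y.2.1)⟩
  exact Real.iInf_of_isEmpty _

lemma angleToSubspace_le_pi_div_two (x : E) (B : Submodule ℝ E) :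
    angleToSubspace x B ≤ π / 2 := by
  rcases eq_or_ne B ⊥ with rfl | hB
  · rw [angleToSubspace_bot]
    positivity
  · obtain ⟨y, hy, hy0⟩ := B.exists_mem_ne_zero_of_ne_bot hB
    exact (angleToSubspace_le_projAngle x hy hy0).trans (projAngle_le_pi_div_two _ _)

lemma le_angleToSubspace {x : E} {B : Submodule ℝ E} (hB : B ≠ ⊥) {θ : ℝ}
    (h : ∀ y ∈ B, y ≠ 0 → θ ≤ projAngle x y) : θ ≤ angleToSubspace x B := by
  obtain ⟨y, hy, hy0⟩ := B.exists_mem_ne_zero_of_ne_bot hB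
  have : Nonempty {y : E // y ∈ B ∧ y ≠ 0} := ⟨⟨y, hy, hy0⟩⟩
  exact le_ciInf fun y => h y y.2.1 y.2.2

lemma hausAngle_nonneg (A B : Submodule ℝ E) : 0 ≤ hausAngle A B :=
  (Real.iSup_nonneg fun _ => angleToSubspace_nonneg _ _).trans (le_max_left _ _)

lemma angleToSubspace_le_hausAngle_right {A B : Submodule ℝ E} {y : E} (hy : y ∈ B)
    (hy0 : y ≠ 0) : angleToSubspace y A ≤ hausAngle A B :=
  (le_ciSup (f := fun y : {y : E // y ∈ B ∧ y ≠ 0} => angleToSubspace (y : E) A)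
    ⟨π / 2, by rintro _ ⟨_, rfl⟩; exact angleToSubspace_le_pi_div_two _ _⟩ ⟨y, hy, hy0⟩).trans
    (le_max_right _ _)

lemma hausAngle_le {A B : Submodule ℝ E} {δ : ℝ} (hδ : 0 ≤ δ)
    (hA : ∀ x ∈ A, x ≠ 0 → angleToSubspace x B ≤ δ)
    (hB : ∀ y ∈ B, y ≠ 0 → angleToSubspace y A ≤ δ) : hausAngle A B ≤ δ :=
  max_le (Real.iSup_le (fun x => hA x x.2.1 x.2.2) hδ)
    (Real.iSup_le (fun y => hB y y.2.1 y.2.2) hδ)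

lemma angleToSubspace_eq_arccos {K : Submodule ℝ E} [K.HasOrthogonalProjection] (hK : K ≠ ⊥)
    (y : E) : angleToSubspace y K = arccos (‖K.starProjection y‖ / ‖y‖) := by
  refine le_antisymm ?_ (le_angleToSubspace hK fun x hx hx0 => ?_)
  · rcases eq_or_ne (K.starProjection y) 0 with h | h
    · rw [h, norm_zero, zero_div, arccos_zero]
      exact angleToSubspace_le_pi_div_two _ _
    · rw [← projAngle_self_starProjection]
      exact angleToSubspace_le_projAngle _ (K.starProjection_apply_mem y) h
  · refine arccos_div_norm_le_projAngle hx0 ?_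
    calc |(inner ℝ y x : ℝ)| = |(inner ℝ (K.starProjection y) x : ℝ)| := by
          rw [K.inner_starProjection_left_eq_right, K.starProjection_eq_self_iff.2 hx]
      _ ≤ ‖K.starProjection y‖ * ‖x‖ := abs_real_inner_le_norm _ _

def Perpendicular (F G : Submodule ℝ E) : Prop :=
  ∀ x ∈ F, ∀ y ∈ G, (∀ z ∈ F ⊓ G, (inner ℝ x z : ℝ) = 0) →
    (∀ z ∈ F ⊓ G, (inner ℝ y z : ℝ) = 0) → (inner ℝ x y : ℝ) = 0

section Perpendicular

variable {F G : Submodule ℝ E} [(F ⊓ G).HasOrthogonalProjection]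

lemma Perpendicular.inner_eq_inner_starProjection (hperp : Perpendicular F G) {x y : E}
    (hx : x ∈ F) (hy : y ∈ G) :
    (inner ℝ x y : ℝ) = inner ℝ ((F ⊓ G).starProjection x) ((F ⊓ G).starProjection y) := by
  set P := (F ⊓ G).starProjection
  have hPx : P x ∈ F ⊓ G := (F ⊓ G).starProjection_apply_mem x
  have hPy : P y ∈ F ⊓ G := (F ⊓ G).starProjection_apply_mem y
  have hxy : (inner ℝ (x - P x) (y - P y) : ℝ) = 0 :=
    hperp _ (sub_mem hx hPx.1) _ (sub_mem hy hPy.2)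
      ((F ⊓ G).starProjection_inner_eq_zero x) ((F ⊓ G).starProjection_inner_eq_zero y)
  have hxPy : (inner ℝ (x - P x) (P y) : ℝ) = 0 := (F ⊓ G).starProjection_inner_eq_zero x _ hPy
  have hPxy : (inner ℝ (P x) (y - P y) : ℝ) = 0 := by
    rw [real_inner_comm]; exact (F ⊓ G).starProjection_inner_eq_zero y _ hPx
  calc (inner ℝ x y : ℝ) = inner ℝ (P x + (x - P x)) (P y + (y - P y)) := by
        rw [add_sub_cancel, add_sub_cancel]
    _ = inner ℝ (P x) (P y) := by
        rw [inner_add_left, inner_add_right, inner_add_right, hxy, hxPy, hPxy]; ring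

lemma Perpendicular.angleToSubspace_inf_le (hperp : Perpendicular F G) {y : E} (hy : y ∈ G) :
    angleToSubspace y (F ⊓ G) ≤ angleToSubspace y F := by
  rcases eq_or_ne (F ⊓ G) ⊥ with hK | hK
  · rw [hK, angleToSubspace_bot]
    exact angleToSubspace_nonneg _ _
  rw [angleToSubspace_eq_arccos hK]
  refine le_angleToSubspace (ne_bot_of_le_ne_bot hK inf_le_left) fun x hx hx0 => ?_
  refine arccos_div_norm_le_projAngle hx0 ?_
  calc |(inner ℝ y x : ℝ)|
      = |(inner ℝ ((F ⊓ G).starProjection x) ((F ⊓ G).starProjection y) : ℝ)| := by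
        rw [real_inner_comm, hperp.inner_eq_inner_starProjection hx hy]
    _ ≤ ‖(F ⊓ G).starProjection x‖ * ‖(F ⊓ G).starProjection y‖ := abs_real_inner_le_norm _ _
    _ ≤ ‖(F ⊓ G).starProjection y‖ * ‖x‖ := by
        rw [mul_comm]; gcongr; exact (F ⊓ G).norm_starProjection_apply_le x

end Perpendicular

lemma angleToSubspace_le_of_finrank_eq {K K' : Submodule ℝ E} [FiniteDimensional ℝ K]
    [FiniteDimensional ℝ K'] (hdim : Module.finrank ℝ K' = Module.finrank ℝ K) {δ : ℝ}
    (h : ∀ y ∈ K', y ≠ 0 → angleToSubspace y K ≤ δ) {x : E} (hx : x ∈ K) (hx0 : x ≠ 0) :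
    angleToSubspace x K' ≤ δ := by
  rcases le_or_gt (π / 2) δ with hδ | hδ
  · exact (angleToSubspace_le_pi_div_two _ _).trans hδ
  have hK : K ≠ ⊥ := fun hK => hx0 ((Submodule.mem_bot ℝ).1 (hK ▸ hx))
  let L : K' →ₗ[ℝ] K := K.orthogonalProjectionOnto.toLinearMap ∘ₗ K'.subtype
  have hL (y : K') : (L y : E) = K.starProjection y := rfl
  have hLinj : Function.Injective L := by
    refine (injective_iff_map_eq_zero L).2 fun y hy => ?_
    by_contra hy0
    have hyK := h (y : E) y.2 (by simpa using hy0)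
    rw [angleToSubspace_eq_arccos hK, ← hL, hy, Submodule.coe_zero, norm_zero, zero_div,
      arccos_zero] at hyK
    linarith
  obtain ⟨y, hy⟩ := (LinearMap.injective_iff_surjective_of_finrank_eq_finrank hdim).1 hLinj ⟨x, hx⟩
  have hPy : K.starProjection y = x := by rw [← hL, hy]
  have hy0 : (y : E) ≠ 0 := fun hy0 => hx0 (by rw [← hPy, hy0, map_zero])
  calc angleToSubspace x K' ≤ projAngle x (y : E) := angleToSubspace_le_projAngle _ y.2 hy0
    _ = angleToSubspace (y : E) K := by
        rw [← hPy, projAngle_comm, projAngle_self_starProjection, angleToSubspace_eq_arccos hK]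
    _ ≤ δ := h (y : E) y.2 hy0

end

/-- If `F` and `G` are perpendicular (the orthogonal complements of `F ∩ G` within `F` and
within `G` are orthogonal to each other) and `dim (F' ∩ G) = dim (F ∩ G)`, then
`α^Haus(F ∩ G, F' ∩ G) ≤ α^Haus(F, F')`. -/
theorem hausAngle_inter_le {E : Type*} [NormedAddCommGroup E] [InnerProductSpace ℝ E]
    [FiniteDimensional ℝ E] (F G F' : Submodule ℝ E)
    (hperp : ∀ x ∈ F, ∀ y ∈ G, (∀ z ∈ F ⊓ G, (inner ℝ x z : ℝ) = 0) →
      (∀ z ∈ F ⊓ G, (inner ℝ y z : ℝ) = 0) → (inner ℝ x y : ℝ) = 0)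
    (hdim : Module.finrank ℝ ↥(F' ⊓ G) = Module.finrank ℝ ↥(F ⊓ G)) :
    hausAngle (F ⊓ G) (F' ⊓ G) ≤ hausAngle F F' := by
  have hK'K : ∀ y ∈ F' ⊓ G, y ≠ 0 → angleToSubspace y (F ⊓ G) ≤ hausAngle F F' :=
    fun y hy hy0 => (Perpendicular.angleToSubspace_inf_le hperp hy.2).trans
      (angleToSubspace_le_hausAngle_right hy.1 hy0)
  exact hausAngle_le (hausAngle_nonneg F F')
    (fun x hx hx0 => angleToSubspace_le_of_finrank_eq hdim hK'K hx hx0) hK'K
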